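/- arXiv:2510.04621 — 2 statements merged into one kernel-verified Lean document; each statement's English description precedes it below -/
import Mathlib

section
/- Let G be a finite bipartite graph and suppose B ∪ W = X ⊎ Y where X and Y are nonempty and fully adjacent. Then D(G) = Dom( D(X) ⊕ D(Y) ). -/
open Finset

/-- A finite bipartite graph: black vertices `B`, white vertices `W` (disjoint finite sets),
and an edge set `E ⊆ B × W`. -/
structure BipGraph (V : Type) [DecidableEq V] where
  B : Finset V
  W : Finset V
  disj : Disjoint B W
  E : Set (V × V)
  E_sub : ∀ e ∈ E, e.1 ∈ B ∧ e.2 ∈ W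

variable {V : Type} [DecidableEq V]

/-- `(S, T)` is a biclique of `G`. -/
def IsBiclique (G : BipGraph V) (S T : Finset V) : Prop :=
  S ⊆ G.B ∧ T ⊆ G.W ∧ ∀ b ∈ S, ∀ w ∈ T, (b, w) ∈ G.E

/-- `(b, w)` is a bisize of `G`: `G` contains a biclique of size `(b, w)`. -/
def Bisize (G : BipGraph V) (p : ℕ × ℕ) : Prop :=
  ∃ S T, IsBiclique G S T ∧ S.card = p.1 ∧ T.card = p.2

/-- `Dominates p q` : `p` dominates `q`, i.e. `q.1 ≤ p.1` and `q.2 ≤ p.2`. -/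
def Dominates (p q : ℕ × ℕ) : Prop := q.1 ≤ p.1 ∧ q.2 ≤ p.2

/-- A maxbisize of `G` : a bisize not strictly dominated by another bisize. -/
def MaxBisize (G : BipGraph V) (p : ℕ × ℕ) : Prop :=
  Bisize G p ∧ ∀ q, Bisize G q → Dominates q p → q = p

/-- `DD G` is the set of maxbisizes of `G` (denoted `D(G)` in the paper). -/
def DD (G : BipGraph V) : Set (ℕ × ℕ) := {p | MaxBisize G p}

/-- `Dom X` : the elements of `X` not strictly dominated by another element of `X`. -/
def Dom (X : Set (ℕ × ℕ)) : Set (ℕ × ℕ) := {p ∈ X | ∀ q ∈ X, Dominates q p → q = p}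

/-- The induced subgraph `G[M]`. -/
def induce (G : BipGraph V) (M : Finset V) : BipGraph V where
  B := G.B ∩ M
  W := G.W ∩ M
  disj := G.disj.mono inter_subset_left inter_subset_left
  E := {e ∈ G.E | e.1 ∈ M ∧ e.2 ∈ M}
  E_sub := fun e he =>
    ⟨mem_inter.mpr ⟨(G.E_sub e he.1).1, he.2.1⟩, mem_inter.mpr ⟨(G.E_sub e he.1).2, he.2.2⟩⟩

/-- `X` is nonadjacent to `Y` : no vertex of `X` is adjacent to a vertex of `Y`. -/
def Nonadj (G : BipGraph V) (X Y : Finset V) : Prop :=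
  ∀ x ∈ X, ∀ y ∈ Y, (x, y) ∉ G.E ∧ (y, x) ∉ G.E

/-- `X` is fully adjacent to `Y` : every black vertex of `X` is adjacent to every white
vertex of `Y` and every white vertex of `X` is adjacent to every black vertex of `Y`. -/
def FullyAdj (G : BipGraph V) (X Y : Finset V) : Prop :=
  (∀ b ∈ X ∩ G.B, ∀ w ∈ Y ∩ G.W, (b, w) ∈ G.E) ∧
  (∀ b ∈ Y ∩ G.B, ∀ w ∈ X ∩ G.W, (b, w) ∈ G.E)

/-- `X` is left adjacent to `Y` : every black vertex of `X` is adjacent to every white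
vertex of `Y` and no white vertex of `X` is adjacent to a black vertex of `Y`. -/
def LeftAdj (G : BipGraph V) (X Y : Finset V) : Prop :=
  (∀ b ∈ X ∩ G.B, ∀ w ∈ Y ∩ G.W, (b, w) ∈ G.E) ∧
  (∀ b ∈ Y ∩ G.B, ∀ w ∈ X ∩ G.W, (b, w) ∉ G.E)

open Classical in
/-- `X ⊕ Y` with the convention `∅ ⊕ X = X ⊕ ∅ = X`. -/
noncomputable def oplus (X Y : Set (ℕ × ℕ)) : Set (ℕ × ℕ) :=
  if X = ∅ then Y else if Y = ∅ then X
  else {p | ∃ x ∈ X, ∃ y ∈ Y, p = x + y}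

/-- `→_w^z X`. -/
def shiftW (z : ℕ) (X : Set (ℕ × ℕ)) : Set (ℕ × ℕ) := {p | ∃ q ∈ X, p = (q.1, q.2 + z)}

/-- `→_b^z X`. -/
def shiftB (z : ℕ) (X : Set (ℕ × ℕ)) : Set (ℕ × ℕ) := {p | ∃ q ∈ X, p = (q.1 + z, q.2)}

/-- A bimodule of `G`. -/
def Bimodule (G : BipGraph V) (M : Finset V) : Prop :=
  M ⊆ G.B ∪ G.W ∧ ∀ v ∈ (G.B ∪ G.W) \ M, Nonadj G {v} M ∨ FullyAdj G {v} M

/-- The quotient graph of `G` by a family `M` of bimodules: vertex `(i, true)` is the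
black vertex `bᵢ` (present when `Mᵢ ∩ B ≠ ∅`), `(i, false)` the white vertex `wᵢ`. -/
def quotientGraph (G : BipGraph V) {k : ℕ} (M : Fin k → Finset V) :
    BipGraph (Fin k × Bool) where
  B := Finset.univ.filter fun p => p.2 = true ∧ (M p.1 ∩ G.B).Nonempty
  W := Finset.univ.filter fun p => p.2 = false ∧ (M p.1 ∩ G.W).Nonempty
  disj := by
    rw [Finset.disjoint_left]
    intro p hp hq
    simp only [Finset.mem_filter, Finset.mem_univ, true_and] at hp hq
    rw [hp.1] at hq
    exact Bool.noConfusion hq.1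
  E := {e | e.1.2 = true ∧ e.2.2 = false ∧
       ∃ x ∈ M e.1.1 ∩ G.B, ∃ y ∈ M e.2.1 ∩ G.W, (x, y) ∈ G.E}
  E_sub := fun e he => by
    obtain ⟨h1, h2, x, hx, y, hy, _⟩ := he
    constructor <;> simp only [Finset.mem_filter, Finset.mem_univ, true_and]
    · exact ⟨h1, ⟨x, hx⟩⟩
    · exact ⟨h2, ⟨y, hy⟩⟩

/-- `Rroc S` for a set `S` of vertices of the quotient graph. -/
def Rroc (G : BipGraph V) {k : ℕ} (M : Fin k → Finset V)
    (S : Finset (Fin k × Bool)) : Finset V :=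
  S.biUnion fun p => if p.2 then M p.1 ∩ G.B else M p.1 ∩ G.W

/-- `Corr S` for a set `S` of vertices of `G`. -/
def Corr (G : BipGraph V) {k : ℕ} (M : Fin k → Finset V) (C : Finset V) :
    Finset (Fin k × Bool) :=
  Finset.univ.filter fun p =>
    if p.2 then (C ∩ M p.1 ∩ G.B).Nonempty else (C ∩ M p.1 ∩ G.W).Nonempty

/-- `C` is the vertex set of a biclique of `G`. -/
def IsBicliqueVS (G : BipGraph V) (C : Finset V) : Prop :=
  ∃ S T, IsBiclique G S T ∧ S ∪ T = C

/-- `C` is the vertex set of a maximal biclique of `G`. -/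
def MaximalBicliqueVS (G : BipGraph V) (C : Finset V) : Prop :=
  IsBicliqueVS G C ∧ ∀ D, IsBicliqueVS G D → C ⊆ D → C = D

/-- `D_C(Mᵢ)`, the maxbisize set of the bimodule `Mᵢ` with respect to a maximal
biclique `C` of the quotient graph. -/
def DC (G : BipGraph V) {k : ℕ} (M : Fin k → Finset V)
    (C : Finset (Fin k × Bool)) (i : Fin k) : Set (ℕ × ℕ) :=
  if (i, true) ∈ C then
    if (i, false) ∈ C then DD (induce G (M i))
    else {((M i ∩ G.B).card, 0)}
  else
    if (i, false) ∈ C then {(0, (M i ∩ G.W).card)}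
    else ∅

/-- `f 0 ⊕ f 1 ⊕ … ⊕ f (k-1)` (with the convention that `∅` is neutral for `⊕`). -/
noncomputable def oplusFold {k : ℕ} (f : Fin k → Set (ℕ × ℕ)) : Set (ℕ × ℕ) :=
  (List.finRange k).foldr (fun i acc => oplus (f i) acc) ∅

/-- The path on `n` vertices `0, 1, …, n-1`, two-colored alternately; the black
vertices are those whose index has parity `r`. -/
def pathGraph (n r : ℕ) : BipGraph (Fin n) where
  B := Finset.univ.filter fun i => (i : ℕ) % 2 = r
  W := Finset.univ.filter fun i => (i : ℕ) % 2 ≠ r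
  disj := by
    rw [Finset.disjoint_left]
    intro i hi hj
    simp only [Finset.mem_filter, Finset.mem_univ, true_and] at hi hj
    exact hj hi
  E := {e | (e.1 : ℕ) % 2 = r ∧ ((e.1 : ℕ) + 1 = (e.2 : ℕ) ∨ (e.2 : ℕ) + 1 = (e.1 : ℕ))}
  E_sub := fun e he => by
    obtain ⟨h1, h2⟩ := he
    refine ⟨?_, ?_⟩ <;> simp only [Finset.mem_filter, Finset.mem_univ, true_and]
    · exact h1
    · omega

/-- The cycle on `n` vertices `0, 1, …, n-1` (consecutive vertices modulo `n` adjacent),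
two-colored alternately; the black vertices are those whose index has parity `r`. -/
def cycleGraph (n r : ℕ) : BipGraph (Fin n) where
  B := Finset.univ.filter fun i => (i : ℕ) % 2 = r
  W := Finset.univ.filter fun i => (i : ℕ) % 2 ≠ r
  disj := by
    rw [Finset.disjoint_left]
    intro i hi hj
    simp only [Finset.mem_filter, Finset.mem_univ, true_and] at hi hj
    exact hj hi
  E := {e | (e.1 : ℕ) % 2 = r ∧ (e.2 : ℕ) % 2 ≠ r ∧
       (((e.1 : ℕ) + 1) % n = (e.2 : ℕ) ∨ ((e.2 : ℕ) + 1) % n = (e.1 : ℕ))}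
  E_sub := fun e he => by
    obtain ⟨h1, h2, _⟩ := he
    refine ⟨?_, ?_⟩ <;> simp only [Finset.mem_filter, Finset.mem_univ, true_and]
    · exact h1
    · exact h2

/-- The bipartite complement of `G`. -/
def bipCompl (G : BipGraph V) : BipGraph V where
  B := G.B
  W := G.W
  disj := G.disj
  E := {e | e.1 ∈ G.B ∧ e.2 ∈ G.W ∧ e ∉ G.E}
  E_sub := fun _ he => ⟨he.1, he.2.1⟩

/-- `x` and `y` are adjacent in `G`. -/
def Adjv (G : BipGraph V) (x y : V) : Prop := (x, y) ∈ G.E ∨ (y, x) ∈ G.E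

/-- `G` is twin-free: no two distinct vertices have the same set of neighbors. -/
def TwinFree (G : BipGraph V) : Prop :=
  ∀ x ∈ G.B ∪ G.W, ∀ y ∈ G.B ∪ G.W,
    ({z | Adjv G x z} = {z | Adjv G y z}) → x = y

/-- The edges of the skew star `Star_{1,2,3}`: a path `0-1-2-3-4-5` plus a vertex `6`
adjacent only to `2`. -/
def starEdges : List (ℕ × ℕ) := [(0, 1), (1, 2), (2, 3), (3, 4), (4, 5), (2, 6)]

/-- `G` contains no induced `Star_{1,2,3}`. -/
def Star123Free (G : BipGraph V) : Prop :=
  ¬ ∃ v : Fin 7 → V, Function.Injective v ∧ (∀ i, v i ∈ G.B ∪ G.W) ∧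
    ∀ i j : Fin 7, Adjv G (v i) (v j) ↔
      (((i : ℕ), (j : ℕ)) ∈ starEdges ∨ ((j : ℕ), (i : ℕ)) ∈ starEdges)

/-- Every vertex of `G` has degree at most 2 (equivalent to `K_{1,3}`-freeness for
bipartite graphs). -/
def MaxDeg2 (G : BipGraph V) : Prop :=
  ∀ x ∈ G.B ∪ G.W, ({y | Adjv G x y}).ncard ≤ 2

section SeriesAux

variable {V : Type} [DecidableEq V]

lemma dominates_iff (p q : ℕ × ℕ) : Dominates p q ↔ q ≤ p := (Prod.le_def).symm

lemma bisize_finite (G : BipGraph V) : {p | Bisize G p}.Finite := by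
  apply (Set.finite_Iic ((G.B.card, G.W.card) : ℕ × ℕ)).subset
  rintro p ⟨S, T, ⟨hS, hT, -⟩, h1, h2⟩
  exact ⟨h1 ▸ Finset.card_le_card hS, h2 ▸ Finset.card_le_card hT⟩

lemma bisize_zero (G : BipGraph V) : Bisize G (0, 0) :=
  ⟨∅, ∅, ⟨Finset.empty_subset _, Finset.empty_subset _, by simp⟩, rfl, rfl⟩

lemma exists_max (G : BipGraph V) {p : ℕ × ℕ} (hp : Bisize G p) :
    ∃ q, MaxBisize G q ∧ p ≤ q := by
  obtain ⟨q, hq, hmax⟩ := Set.Finite.exists_maximalFor id {r | Bisize G r ∧ p ≤ r}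
      (((bisize_finite G).subset (fun r hr => hr.1)))
      ⟨p, hp, le_refl p⟩
  refine ⟨q, ⟨hq.1, fun r hr hd => ?_⟩, hq.2⟩
  have hle : q ≤ r := (dominates_iff r q).mp hd
  exact le_antisymm (hmax ⟨hr, hq.2.trans hle⟩ hle) hle

lemma DD_eq (G : BipGraph V) : DD G = Dom {p | Bisize G p} := by
  ext p
  simp only [DD, Dom, MaxBisize, Set.mem_setOf_eq]

lemma card_split {X Y A : Finset V} (hdisj : Disjoint X Y) (hA : A ⊆ X ∪ Y) :
    A.card = (A ∩ X).card + (A ∩ Y).card := by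
  rw [← Finset.card_union_of_disjoint
      (hdisj.mono Finset.inter_subset_right Finset.inter_subset_right),
    ← Finset.inter_union_distrib_left, Finset.inter_eq_left.mpr hA]

lemma bisize_split (G : BipGraph V) (X Y : Finset V) (hdisj : Disjoint X Y)
    (hcover : X ∪ Y = G.B ∪ G.W) (hadj : FullyAdj G X Y) (p : ℕ × ℕ) :
    Bisize G p ↔
      ∃ a b, Bisize (induce G X) a ∧ Bisize (induce G Y) b ∧ p = a + b := by
  constructor
  · rintro ⟨S, T, ⟨hSB, hTW, hE⟩, hS, hT⟩
    refine ⟨((S ∩ X).card, (T ∩ X).card), ((S ∩ Y).card, (T ∩ Y).card), ?_, ?_, ?_⟩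
    · refine ⟨S ∩ X, T ∩ X, ⟨?_, ?_, ?_⟩, rfl, rfl⟩
      · exact Finset.inter_subset_inter hSB (Finset.Subset.refl X)
      · exact Finset.inter_subset_inter hTW (Finset.Subset.refl X)
      · intro b hb w hw
        rw [Finset.mem_inter] at hb hw
        exact ⟨hE b hb.1 w hw.1, hb.2, hw.2⟩
    · refine ⟨S ∩ Y, T ∩ Y, ⟨?_, ?_, ?_⟩, rfl, rfl⟩
      · exact Finset.inter_subset_inter hSB (Finset.Subset.refl Y)
      · exact Finset.inter_subset_inter hTW (Finset.Subset.refl Y)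
      · intro b hb w hw
        rw [Finset.mem_inter] at hb hw
        exact ⟨hE b hb.1 w hw.1, hb.2, hw.2⟩
    · have hScov : S ⊆ X ∪ Y := fun v hv => hcover ▸ Finset.mem_union_left _ (hSB hv)
      have hTcov : T ⊆ X ∪ Y := fun v hv => hcover ▸ Finset.mem_union_right _ (hTW hv)
      have hp : p = (S.card, T.card) := by rw [hS, hT]
      rw [hp, Prod.mk_add_mk, card_split hdisj hScov, card_split hdisj hTcov]
  · rintro ⟨a, b, ⟨S1, T1, ⟨hS1, hT1, hE1⟩, ha1, ha2⟩,
      ⟨S2, T2, ⟨hS2, hT2, hE2⟩, hb1, hb2⟩, rfl⟩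
    have hS1X : S1 ⊆ G.B ∩ X := hS1
    have hT1X : T1 ⊆ G.W ∩ X := hT1
    have hS2Y : S2 ⊆ G.B ∩ Y := hS2
    have hT2Y : T2 ⊆ G.W ∩ Y := hT2
    refine ⟨S1 ∪ S2, T1 ∪ T2, ⟨?_, ?_, ?_⟩, ?_, ?_⟩
    · exact Finset.union_subset (fun v hv => (Finset.mem_inter.mp (hS1X hv)).1)
        (fun v hv => (Finset.mem_inter.mp (hS2Y hv)).1)
    · exact Finset.union_subset (fun v hv => (Finset.mem_inter.mp (hT1X hv)).1)
        (fun v hv => (Finset.mem_inter.mp (hT2Y hv)).1)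
    · intro v hv w hw
      rw [Finset.mem_union] at hv hw
      rcases hv with hv | hv <;> rcases hw with hw | hw
      · exact (hE1 v hv w hw).1
      · have h1 := Finset.mem_inter.mp (hS1X hv)
        have h2 := Finset.mem_inter.mp (hT2Y hw)
        exact hadj.1 v (Finset.mem_inter.mpr ⟨h1.2, h1.1⟩) w
          (Finset.mem_inter.mpr ⟨h2.2, h2.1⟩)
      · have h1 := Finset.mem_inter.mp (hS2Y hv)
        have h2 := Finset.mem_inter.mp (hT1X hw)
        exact hadj.2 v (Finset.mem_inter.mpr ⟨h1.2, h1.1⟩) w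
          (Finset.mem_inter.mpr ⟨h2.2, h2.1⟩)
      · exact (hE2 v hv w hw).1
    · rw [Finset.card_union_of_disjoint
        (hdisj.mono (fun v hv => (Finset.mem_inter.mp (hS1X hv)).2)
          (fun v hv => (Finset.mem_inter.mp (hS2Y hv)).2)), ha1, hb1]
      rfl
    · rw [Finset.card_union_of_disjoint
        (hdisj.mono (fun v hv => (Finset.mem_inter.mp (hT1X hv)).2)
          (fun v hv => (Finset.mem_inter.mp (hT2Y hv)).2)), ha2, hb2]
      rfl

lemma dom_sum (A B : Set (ℕ × ℕ))
    (hA : ∀ a ∈ A, ∃ a' ∈ Dom A, a ≤ a') (hB : ∀ b ∈ B, ∃ b' ∈ Dom B, b ≤ b') :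
    Dom {p | ∃ a ∈ A, ∃ b ∈ B, p = a + b} =
      Dom {p | ∃ a ∈ Dom A, ∃ b ∈ Dom B, p = a + b} := by
  set S : Set (ℕ × ℕ) := {p | ∃ a ∈ A, ∃ b ∈ B, p = a + b} with hS
  set S' : Set (ℕ × ℕ) := {p | ∃ a ∈ Dom A, ∃ b ∈ Dom B, p = a + b} with hS'
  have hsub : S' ⊆ S := by
    rintro p ⟨a, ha, b, hb, rfl⟩
    exact ⟨a, ha.1, b, hb.1, rfl⟩
  have habove : ∀ p ∈ S, ∃ p' ∈ S', p ≤ p' := by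
    rintro p ⟨a, ha, b, hb, rfl⟩
    obtain ⟨a', ha', haa⟩ := hA a ha
    obtain ⟨b', hb', hbb⟩ := hB b hb
    exact ⟨a' + b', ⟨a', ha', b', hb', rfl⟩, add_le_add haa hbb⟩
  ext p
  constructor
  · rintro ⟨hpS, hmax⟩
    obtain ⟨p', hp', hle⟩ := habove p hpS
    have := hmax p' (hsub hp') ((dominates_iff p' p).mpr hle)
    refine ⟨this ▸ hp', fun q hq hd => hmax q (hsub hq) hd⟩
  · rintro ⟨hpS', hmax'⟩
    refine ⟨hsub hpS', fun q hq hd => ?_⟩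
    obtain ⟨q', hq', hle⟩ := habove q hq
    have hpq : p ≤ q := (dominates_iff q p).mp hd
    have h1 : q' = p := hmax' q' hq' ((dominates_iff q' p).mpr (hpq.trans hle))
    exact le_antisymm (hle.trans h1.le) hpq

end SeriesAux

/-- Series case, Theorem 9 of the paper. -/
theorem series_case {V : Type} [DecidableEq V] (G : BipGraph V) (X Y : Finset V)
    (hX : X.Nonempty) (hY : Y.Nonempty) (hdisj : Disjoint X Y)
    (hcover : X ∪ Y = G.B ∪ G.W)
    (hadj : FullyAdj G X Y) :
    DD G = Dom (oplus (DD (induce G X)) (DD (induce G Y))) := by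
  have hne1 : DD (induce G X) ≠ ∅ := by
    obtain ⟨q, hq, -⟩ := exists_max (induce G X) (bisize_zero _)
    exact Set.nonempty_iff_ne_empty.mp ⟨q, hq⟩
  have hne2 : DD (induce G Y) ≠ ∅ := by
    obtain ⟨q, hq, -⟩ := exists_max (induce G Y) (bisize_zero _)
    exact Set.nonempty_iff_ne_empty.mp ⟨q, hq⟩
  rw [oplus, if_neg hne1, if_neg hne2]
  have hsplit : {p | Bisize G p} =
      {p | ∃ a ∈ {r | Bisize (induce G X) r}, ∃ b ∈ {r | Bisize (induce G Y) r},
        p = a + b} := by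
    ext p
    simpa using bisize_split G X Y hdisj hcover hadj p
  have hA : ∀ a ∈ {r | Bisize (induce G X) r},
      ∃ a' ∈ Dom {r | Bisize (induce G X) r}, a ≤ a' := by
    intro a ha
    obtain ⟨q, hq, hle⟩ := exists_max (induce G X) ha
    exact ⟨q, (DD_eq (induce G X)) ▸ hq, hle⟩
  have hB : ∀ b ∈ {r | Bisize (induce G Y) r},
      ∃ b' ∈ Dom {r | Bisize (induce G Y) r}, b ≤ b' := by
    intro b hb
    obtain ⟨q, hq, hle⟩ := exists_max (induce G Y) hb
    exact ⟨q, (DD_eq (induce G Y)) ▸ hq, hle⟩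
  rw [DD_eq, hsplit, dom_sum _ _ hA hB, ← DD_eq, ← DD_eq]
end

section
/- Let G be a finite bipartite graph and let M_1, …, M_k be a partition of B ∪ W into bimodules of G, with quotient graph H. Then D(G) = Dom( ⋃_{C} D(Rroc(C)) ), where the union ranges over all maximal bicliques C of H (identified with their vertex sets). -/
open Finset

variable {V : Type} [DecidableEq V]

/-! The vertices of `H` met by a biclique of `G` form a biclique of `H`, since an edge `bᵢwⱼ` of
`H` only asks for one edge of `G` between `Mᵢ` and `Mⱼ`. That biclique lies in a maximal one `C`,
and then the biclique of `G` lies in `G[Rroc C]`. So every bisize of `G` is dominated by a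
maxbisize of some `G[Rroc C]`, each of which is a bisize of `G`; for such a cofinal family the
undominated elements are exactly the maxbisizes of `G`. -/

theorem maximal_iff_maximal_mem_of_cofinal {α : Type*} [PartialOrder α] {P : α → Prop}
    {X : Set α} (hXP : ∀ x ∈ X, P x) (hcof : ∀ p, P p → ∃ x ∈ X, p ≤ x) {p : α} :
    Maximal P p ↔ Maximal (· ∈ X) p := by
  constructor
  · intro hp
    obtain ⟨x, hxX, hpx⟩ := hcof p hp.prop
    have hxp : x = p := (hp.eq_of_le (hXP x hxX) hpx).symm
    exact ⟨hxp ▸ hxX, fun y hyX hpy => hp.2 (hXP y hyX) hpy⟩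
  · intro hp
    refine ⟨hXP p hp.prop, fun q hq hpq => ?_⟩
    obtain ⟨x, hxX, hqx⟩ := hcof q hq
    exact hqx.trans (hp.2 hxX (hpq.trans hqx))

theorem dominates_iff_le {p q : ℕ × ℕ} : Dominates p q ↔ q ≤ p := Iff.rfl

theorem mem_DD_iff_maximal {G : BipGraph V} {p : ℕ × ℕ} :
    p ∈ DD G ↔ Maximal (Bisize G) p := by
  change MaxBisize G p ↔ _
  simp only [MaxBisize, maximal_iff, dominates_iff_le, eq_comm]

theorem mem_Dom_iff_maximal {X : Set (ℕ × ℕ)} {p : ℕ × ℕ} :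
    p ∈ Dom X ↔ Maximal (· ∈ X) p := by
  change p ∈ X ∧ _ ↔ _
  simp only [maximal_iff, dominates_iff_le, eq_comm]

theorem maximalBicliqueVS_iff {G : BipGraph V} {C : Finset V} :
    MaximalBicliqueVS G C ↔ Maximal (IsBicliqueVS G) C := by
  rw [maximal_iff]; rfl

namespace Bisize

variable {G : BipGraph V} {p : ℕ × ℕ}

theorem le_card (h : Bisize G p) : p ≤ (G.B.card, G.W.card) := by
  obtain ⟨S, T, ⟨hSB, hTW, _⟩, hS, hT⟩ := h
  exact ⟨hS ▸ card_le_card hSB, hT ▸ card_le_card hTW⟩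

theorem exists_le_maxBisize (h : Bisize G p) : ∃ q ∈ DD G, p ≤ q := by
  have hfin : {q | Bisize G q}.Finite :=
    (Set.finite_Iic (G.B.card, G.W.card)).subset fun q hq => le_card hq
  obtain ⟨q, hpq, hq⟩ := hfin.exists_le_maximal h
  exact ⟨q, mem_DD_iff_maximal.2 hq, hpq⟩

end Bisize

theorem DD_eq_Dom_of_cofinal {G : BipGraph V} {X : Set (ℕ × ℕ)}
    (hX : ∀ x ∈ X, Bisize G x) (hcof : ∀ p, Bisize G p → ∃ x ∈ X, p ≤ x) :
    DD G = Dom X := by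
  ext p
  rw [mem_DD_iff_maximal, mem_Dom_iff_maximal, maximal_iff_maximal_mem_of_cofinal hX hcof]

section Induce

variable {G : BipGraph V} {N S T : Finset V}

theorem IsBiclique.of_induce (h : IsBiclique (induce G N) S T) : IsBiclique G S T :=
  ⟨h.1.trans inter_subset_left, h.2.1.trans inter_subset_left,
    fun b hb w hw => (h.2.2 b hb w hw).1⟩

theorem IsBiclique.induce (h : IsBiclique G S T) (hN : S ∪ T ⊆ N) :
    IsBiclique (induce G N) S T := by
  have hSN : S ⊆ N := subset_union_left.trans hN
  have hTN : T ⊆ N := subset_union_right.trans hN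
  exact ⟨subset_inter h.1 hSN, subset_inter h.2.1 hTN,
    fun b hb w hw => ⟨h.2.2 b hb w hw, hSN hb, hTN hw⟩⟩

theorem Bisize.of_induce {p : ℕ × ℕ} (h : Bisize (induce G N) p) : Bisize G p :=
  let ⟨S, T, hST, hS, hT⟩ := h
  ⟨S, T, hST.of_induce, hS, hT⟩

end Induce

section Quotient

variable {G : BipGraph V} {k : ℕ} {M : Fin k → Finset V}

theorem exists_mem_of_mem_corr_of_subset_black {S : Finset V} (hS : S ⊆ G.B)
    {p : Fin k × Bool} (hp : p ∈ Corr G M S) : p.2 = true ∧ ∃ x ∈ S, x ∈ M p.1 := by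
  obtain ⟨i, _ | _⟩ := p <;> simp only [Corr, mem_filter, mem_univ, true_and] at hp
  · obtain ⟨x, hx⟩ := hp
    simp only [mem_inter] at hx
    exact absurd hx.2 (disjoint_left.1 G.disj (hS hx.1.1))
  · obtain ⟨x, hx⟩ := hp
    simp only [mem_inter] at hx
    exact ⟨rfl, x, hx.1.1, hx.1.2⟩

theorem exists_mem_of_mem_corr_of_subset_white {T : Finset V} (hT : T ⊆ G.W)
    {p : Fin k × Bool} (hp : p ∈ Corr G M T) : p.2 = false ∧ ∃ y ∈ T, y ∈ M p.1 := by
  obtain ⟨i, _ | _⟩ := p <;> simp only [Corr, mem_filter, mem_univ, true_and] at hp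
  · obtain ⟨y, hy⟩ := hp
    simp only [mem_inter] at hy
    exact ⟨rfl, y, hy.1.1, hy.1.2⟩
  · obtain ⟨y, hy⟩ := hp
    simp only [mem_inter] at hy
    exact absurd (hT hy.1.1) (disjoint_left.1 G.disj hy.2)

theorem IsBiclique.corr {S T : Finset V} (h : IsBiclique G S T) :
    IsBiclique (quotientGraph G M) (Corr G M S) (Corr G M T) := by
  obtain ⟨hSB, hTW, hE⟩ := h
  refine ⟨fun p hp => ?_, fun p hp => ?_, fun b hb w hw => ?_⟩
  · obtain ⟨hp2, x, hxS, hxM⟩ := exists_mem_of_mem_corr_of_subset_black hSB hp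
    simp only [quotientGraph, mem_filter, mem_univ, true_and]
    exact ⟨hp2, x, mem_inter.2 ⟨hxM, hSB hxS⟩⟩
  · obtain ⟨hp2, y, hyT, hyM⟩ := exists_mem_of_mem_corr_of_subset_white hTW hp
    simp only [quotientGraph, mem_filter, mem_univ, true_and]
    exact ⟨hp2, y, mem_inter.2 ⟨hyM, hTW hyT⟩⟩
  · obtain ⟨hb2, x, hxS, hxM⟩ := exists_mem_of_mem_corr_of_subset_black hSB hb
    obtain ⟨hw2, y, hyT, hyM⟩ := exists_mem_of_mem_corr_of_subset_white hTW hw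
    exact ⟨hb2, hw2, x, mem_inter.2 ⟨hxM, hSB hxS⟩, y, mem_inter.2 ⟨hyM, hTW hyT⟩,
      hE x hxS y hyT⟩

theorem corr_union (S T : Finset V) : Corr G M (S ∪ T) = Corr G M S ∪ Corr G M T := by
  ext ⟨i, _ | _⟩ <;> simp [Corr, union_inter_distrib_right]

theorem subset_rroc_corr (hcover : univ.biUnion M = G.B ∪ G.W) {C : Finset V}
    (hC : C ⊆ G.B ∪ G.W) : C ⊆ Rroc G M (Corr G M C) := by
  intro x hxC
  have hx := hC hxC
  obtain ⟨i, -, hxi⟩ := mem_biUnion.1 (hcover ▸ hx)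
  simp only [Rroc, Corr, mem_biUnion, mem_filter, mem_univ, true_and]
  rcases mem_union.1 hx with hxB | hxW
  · exact ⟨(i, true), ⟨x, by simp [hxC, hxi, hxB]⟩, by simp [hxi, hxB]⟩
  · exact ⟨(i, false), ⟨x, by simp [hxC, hxi, hxW]⟩, by simp [hxi, hxW]⟩

theorem rroc_mono {S S' : Finset (Fin k × Bool)} (h : S ⊆ S') : Rroc G M S ⊆ Rroc G M S' :=
  biUnion_subset_biUnion_of_subset_left _ h

theorem Bisize.exists_maximalBicliqueVS_quotientGraph
    (hcover : univ.biUnion M = G.B ∪ G.W) {p : ℕ × ℕ} (h : Bisize G p) :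
    ∃ C, MaximalBicliqueVS (quotientGraph G M) C ∧ Bisize (induce G (Rroc G M C)) p := by
  obtain ⟨S, T, hST, hS, hT⟩ := h
  have hC₀ : IsBicliqueVS (quotientGraph G M) (Corr G M (S ∪ T)) :=
    ⟨_, _, hST.corr, (corr_union S T).symm⟩
  obtain ⟨C, hC₀C, hC⟩ := Finite.exists_le_maximal hC₀
  have hSTC : S ∪ T ⊆ Rroc G M C :=
    (subset_rroc_corr hcover (union_subset_union hST.1 hST.2.1)).trans (rroc_mono hC₀C)
  exact ⟨C, maximalBicliqueVS_iff.2 hC, S, T, hST.induce hSTC, hS, hT⟩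

end Quotient

theorem prime_case_general {V : Type} [DecidableEq V] (G : BipGraph V)
    (k : ℕ) (M : Fin k → Finset V)
    (hcover : Finset.univ.biUnion M = G.B ∪ G.W) :
    DD G = Dom (⋃ C ∈ {C | MaximalBicliqueVS (quotientGraph G M) C},
      DD (induce G (Rroc G M C))) := by
  refine DD_eq_Dom_of_cofinal ?_ fun p hp => ?_
  · simp only [Set.mem_iUnion]
    rintro x ⟨C, -, hx⟩
    exact Bisize.of_induce (mem_DD_iff_maximal.1 hx).prop
  · obtain ⟨C, hC, hpC⟩ := hp.exists_maximalBicliqueVS_quotientGraph hcover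
    obtain ⟨x, hx, hpx⟩ := hpC.exists_le_maxBisize
    exact ⟨x, Set.mem_biUnion hC hx, hpx⟩

/-- second part of Theorem 17 of the paper. -/
theorem prime_case {V : Type} [DecidableEq V] (G : BipGraph V)
    (k : ℕ) (M : Fin k → Finset V)
    (hne : ∀ i, (M i).Nonempty)
    (hdisj : ∀ i j, i ≠ j → Disjoint (M i) (M j))
    (hcover : Finset.univ.biUnion M = G.B ∪ G.W)
    (hbim : ∀ i, Bimodule G (M i)) :
    DD G = Dom (⋃ C ∈ {C | MaximalBicliqueVS (quotientGraph G M) C},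
      DD (induce G (Rroc G M C))) :=
  prime_case_general G k M hcover
end
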